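/- Let R be a finite additive split semiring and let (!, p, d, c, w, c̄, w̄) be an R-graded additive bialgebra modality on an additive symmetric monoidal category L with finite biproducts ⊕ (with projections π, injections ι) and zero object 0. For each r ∈ R define χ⊗_r : !_r(A ⊕ B) → ⊕_{s+t=r} (!_s A ⊗ !_t B) by χ⊗_r = Σ_{s+t=r} c_{s,t} ; (!_s(π₀) ⊗ !_t(π₁)) ; ι_{s,t}, and define χI := w : !_0 0 → I. Then χ⊗_r and χI are natural isomorphisms (the graded Seely isomorphisms !_r(A ⊕ B) ≅ ⊕_{s+t=r} !_s A ⊗ !_t B and !_0 0 ≅ I), with inverses (χ⊗_r)⁻¹ = Σ_{s+t=r} π_{s,t} ; (!_s(ι₀) ⊗ !_t(ι₁)) ; c̄_{s,t} and (χI)⁻¹ = w̄. -/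

import Mathlib

open CategoryTheory MonoidalCategory Limits

universe v u

/-- An additive symmetric monoidal category: homs are commutative monoids and
composition and the monoidal product preserve sums and zero maps. -/
class AdditiveMonoidal (C : Type u) [Category.{v} C] [MonoidalCategory C]
    [∀ X Y : C, AddCommMonoid (X ⟶ Y)] : Prop where
  add_comp : ∀ {X Y Z : C} (f g : X ⟶ Y) (h : Y ⟶ Z), (f + g) ≫ h = f ≫ h + g ≫ h
  comp_add : ∀ {X Y Z : C} (f : X ⟶ Y) (g h : Y ⟶ Z), f ≫ (g + h) = f ≫ g + f ≫ h
  zero_comp : ∀ {X Y Z : C} (g : Y ⟶ Z), (0 : X ⟶ Y) ≫ g = 0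
  comp_zero : ∀ {X Y Z : C} (f : X ⟶ Y), f ≫ (0 : Y ⟶ Z) = 0
  add_tensor : ∀ {X Y Z W : C} (f g : X ⟶ Y) (h : Z ⟶ W), (f + g) ⊗ₘ h = f ⊗ₘ h + g ⊗ₘ h
  tensor_add : ∀ {X Y Z W : C} (f : X ⟶ Y) (g h : Z ⟶ W), f ⊗ₘ (g + h) = f ⊗ₘ g + f ⊗ₘ h
  zero_tensor : ∀ {X Y Z W : C} (h : Z ⟶ W), (0 : X ⟶ Y) ⊗ₘ h = 0
  tensor_zero : ∀ {X Y Z W : C} (f : X ⟶ Y), f ⊗ₘ (0 : Z ⟶ W) = 0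

/-- A finite additive split (f.a.s.) semiring. -/
class FAS (R : Type) [Semiring R] : Prop where
  finite_antidiag : ∀ r : R, {q : R × R | q.1 + q.2 = r}.Finite
  add_eq_zero : ∀ {s t : R}, s + t = 0 → s = 0 ∧ t = 0
  add_eq_one : ∀ {s t : R}, s + t = 1 → (s = 1 ∧ t = 0) ∨ (s = 0 ∧ t = 1)
  add_cancel : ∀ {r s t : R}, r + s = r + t → s = t

variable {R : Type} [Semiring R]
variable {C : Type u} [Category.{v} C] [MonoidalCategory C] [SymmetricCategory C]

/-- The canonical identification `!_r A ⟶ !_s A` coming from an equality `r = s` of grades. -/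
def bc (bang : R → C ⥤ C) {r s : R} (h : r = s) (A : C) :
    (bang r).obj A ⟶ (bang s).obj A :=
  eqToHom (congrArg (fun t => (bang t).obj A) h)

variable [∀ X Y : C, AddCommMonoid (X ⟶ Y)]

/-- `(bang, p, c, d, w)` is an `R`-graded coalgebra modality. -/
structure IsGradedCoalgebraModality (bang : R → C ⥤ C)
    (p : ∀ (r s : R) (A : C), (bang (r * s)).obj A ⟶ (bang r).obj ((bang s).obj A))
    (c : ∀ (r s : R) (A : C), (bang (r + s)).obj A ⟶ (bang r).obj A ⊗ (bang s).obj A)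
    (d : ∀ A : C, (bang 1).obj A ⟶ A)
    (w : ∀ A : C, (bang 0).obj A ⟶ 𝟙_ C) : Prop where
  p_natural : ∀ (r s : R) {A B : C} (f : A ⟶ B),
    (bang (r * s)).map f ≫ p r s B = p r s A ≫ (bang r).map ((bang s).map f)
  c_natural : ∀ (r s : R) {A B : C} (f : A ⟶ B),
    (bang (r + s)).map f ≫ c r s B = c r s A ≫ ((bang r).map f ⊗ₘ (bang s).map f)
  d_natural : ∀ {A B : C} (f : A ⟶ B), (bang 1).map f ≫ d B = d A ≫ f
  w_natural : ∀ {A B : C} (f : A ⟶ B), (bang 0).map f ≫ w B = w A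
  p_counit_left : ∀ (r : R) (A : C),
    p 1 r A ≫ d ((bang r).obj A) = bc bang (one_mul r) A
  p_counit_right : ∀ (r : R) (A : C),
    p r 1 A ≫ (bang r).map (d A) = bc bang (mul_one r) A
  p_coassoc : ∀ (r s t : R) (A : C),
    p (r * s) t A ≫ p r s ((bang t).obj A)
      = bc bang (mul_assoc r s t) A ≫ p r (s * t) A ≫ (bang r).map (p s t A)
  c_coassoc : ∀ (r s t : R) (A : C),
    c (r + s) t A ≫ (c r s A ⊗ₘ 𝟙 ((bang t).obj A)) ≫ (α_ _ _ _).hom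
      = bc bang (add_assoc r s t) A ≫ c r (s + t) A ≫ (𝟙 ((bang r).obj A) ⊗ₘ c s t A)
  c_counit_right : ∀ (r : R) (A : C),
    c r 0 A ≫ (𝟙 ((bang r).obj A) ⊗ₘ w A) ≫ (ρ_ _).hom = bc bang (add_zero r) A
  c_counit_left : ∀ (r : R) (A : C),
    c 0 r A ≫ (w A ⊗ₘ 𝟙 ((bang r).obj A)) ≫ (λ_ _).hom = bc bang (zero_add r) A
  c_cocomm : ∀ (r s : R) (A : C),
    c r s A ≫ (β_ _ _).hom = bc bang (add_comm r s) A ≫ c s r A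
  p_comonoid : ∀ (r s t : R) (A : C),
    p (r + s) t A ≫ c r s ((bang t).obj A)
      = bc bang (add_mul r s t) A ≫ c (r * t) (s * t) A ≫ (p r t A ⊗ₘ p s t A)
  p_w : ∀ (r : R) (A : C),
    p 0 r A ≫ w ((bang r).obj A) = bc bang (zero_mul r) A ≫ w A

variable [DecidableEq R]

/-- `(bang, p, c, d, w, cb, wb)` is an `R`-graded additive bialgebra modality. -/
structure IsGradedAdditiveBialgebraModality (bang : R → C ⥤ C)
    (p : ∀ (r s : R) (A : C), (bang (r * s)).obj A ⟶ (bang r).obj ((bang s).obj A))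
    (c : ∀ (r s : R) (A : C), (bang (r + s)).obj A ⟶ (bang r).obj A ⊗ (bang s).obj A)
    (d : ∀ A : C, (bang 1).obj A ⟶ A)
    (w : ∀ A : C, (bang 0).obj A ⟶ 𝟙_ C)
    (cb : ∀ (r s : R) (A : C), (bang r).obj A ⊗ (bang s).obj A ⟶ (bang (r + s)).obj A)
    (wb : ∀ A : C, 𝟙_ C ⟶ (bang 0).obj A) : Prop where
  toCoalgebra : IsGradedCoalgebraModality bang p c d w
  cb_natural : ∀ (r s : R) {A B : C} (f : A ⟶ B),
    ((bang r).map f ⊗ₘ (bang s).map f) ≫ cb r s B = cb r s A ≫ (bang (r + s)).map f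
  wb_natural : ∀ {A B : C} (f : A ⟶ B), wb A ≫ (bang 0).map f = wb B
  cb_assoc : ∀ (r s t : R) (A : C),
    (cb r s A ⊗ₘ 𝟙 ((bang t).obj A)) ≫ cb (r + s) t A
      = (α_ _ _ _).hom ≫ (𝟙 ((bang r).obj A) ⊗ₘ cb s t A) ≫ cb r (s + t) A
          ≫ bc bang (add_assoc r s t).symm A
  cb_unit_left : ∀ (r : R) (A : C),
    (wb A ⊗ₘ 𝟙 ((bang r).obj A)) ≫ cb 0 r A
      = (λ_ ((bang r).obj A)).hom ≫ bc bang (zero_add r).symm A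
  cb_unit_right : ∀ (r : R) (A : C),
    (𝟙 ((bang r).obj A) ⊗ₘ wb A) ≫ cb r 0 A
      = (ρ_ ((bang r).obj A)).hom ≫ bc bang (add_zero r).symm A
  cb_comm : ∀ (r s : R) (A : C),
    (β_ _ _).hom ≫ cb s r A = cb r s A ≫ bc bang (add_comm r s) A
  bimonoid : ∀ (r s t u : R) (h : r + s = t + u) (A : C),
    cb r s A ≫ bc bang h A ≫ c t u A
      = ∑ᶠ (q : {q : (R × R) × (R × R) //
            q.1.1 + q.1.2 = r ∧ q.2.1 + q.2.2 = s ∧ q.1.1 + q.2.1 = t ∧ q.1.2 + q.2.2 = u}),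
          ((bc bang q.2.1.symm A ≫ c q.1.1.1 q.1.1.2 A)
              ⊗ₘ (bc bang q.2.2.1.symm A ≫ c q.1.2.1 q.1.2.2 A))
            ≫ tensorμ _ _ _ _
            ≫ ((cb q.1.1.1 q.1.2.1 A ≫ bc bang q.2.2.2.1 A)
                ⊗ₘ (cb q.1.1.2 q.1.2.2 A ≫ bc bang q.2.2.2.2 A))
  wb_w : ∀ A : C, wb A ≫ w A = 𝟙 (𝟙_ C)
  wb_c : ∀ A : C,
    wb A ≫ bc bang (add_zero (0 : R)).symm A ≫ c 0 0 A = (λ_ (𝟙_ C)).inv ≫ (wb A ⊗ₘ wb A)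
  cb_w : ∀ A : C,
    cb 0 0 A ≫ bc bang (add_zero (0 : R)) A ≫ w A = (w A ⊗ₘ w A) ≫ (λ_ (𝟙_ C)).hom
  cb_d : ∀ (r s : R) (h : r + s = 1) (A : C),
    cb r s A ≫ bc bang h A ≫ d A
      = (if hr : r = 0 then
          (bc bang hr A ⊗ₘ bc bang (show s = 1 by rw [hr, zero_add] at h; exact h) A)
            ≫ (w A ⊗ₘ d A) ≫ (λ_ A).hom
         else 0)
        + (if hs : s = 0 then
          (bc bang (show r = 1 by rw [hs, add_zero] at h; exact h) A ⊗ₘ bc bang hs A)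
            ≫ (d A ⊗ₘ w A) ≫ (ρ_ A).hom
         else 0)
  map_add : ∀ (r : R) {A B : C} (f g : A ⟶ B),
    (bang r).map (f + g)
      = ∑ᶠ (q : {q : R × R // q.1 + q.2 = r}),
          bc bang q.2.symm A ≫ c q.1.1 q.1.2 A
            ≫ ((bang q.1.1).map f ⊗ₘ (bang q.1.2).map g)
            ≫ cb q.1.1 q.1.2 B ≫ bc bang q.2 B
  map_zero : ∀ (r : R) {A B : C},
    (bang r).map (0 : A ⟶ B)
      = if hr : r = 0 then bc bang hr A ≫ w A ≫ wb B ≫ bc bang hr.symm B else 0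


/-- The graded Seely map `χ⊗_r : !_r(A ⊕ B) ⟶ ⊕_{s+t=r} !_s A ⊗ !_t B`, defined as
`Σ_{s+t=r} c_{s,t} ; (!_s(π₀) ⊗ !_t(π₁)) ; ι_{s,t}`. -/
noncomputable def seelyMap (bang : R → C ⥤ C)
    (c : ∀ (r s : R) (A : C), (bang (r + s)).obj A ⟶ (bang r).obj A ⊗ (bang s).obj A)
    (bp : C → C → C) (pr₀ : ∀ A B : C, bp A B ⟶ A) (pr₁ : ∀ A B : C, bp A B ⟶ B)
    (bb : R → C → C → C)
    (J : ∀ (r : R) (A B : C) (x : {q : R × R // q.1 + q.2 = r}),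
      (bang x.1.1).obj A ⊗ (bang x.1.2).obj B ⟶ bb r A B)
    (r : R) (A B : C) : (bang r).obj (bp A B) ⟶ bb r A B :=
  ∑ᶠ (x : {q : R × R // q.1 + q.2 = r}),
    bc bang x.2.symm (bp A B) ≫ c x.1.1 x.1.2 (bp A B)
      ≫ ((bang x.1.1).map (pr₀ A B) ⊗ₘ (bang x.1.2).map (pr₁ A B)) ≫ J r A B x

/-- The inverse graded Seely map `Σ_{s+t=r} π_{s,t} ; (!_s(ι₀) ⊗ !_t(ι₁)) ; c̄_{s,t}`. -/
noncomputable def seelyInv (bang : R → C ⥤ C)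
    (cb : ∀ (r s : R) (A : C), (bang r).obj A ⊗ (bang s).obj A ⟶ (bang (r + s)).obj A)
    (bp : C → C → C) (in₀ : ∀ A B : C, A ⟶ bp A B) (in₁ : ∀ A B : C, B ⟶ bp A B)
    (bb : R → C → C → C)
    (P : ∀ (r : R) (A B : C) (x : {q : R × R // q.1 + q.2 = r}),
      bb r A B ⟶ (bang x.1.1).obj A ⊗ (bang x.1.2).obj B)
    (r : R) (A B : C) : bb r A B ⟶ (bang r).obj (bp A B) :=
  ∑ᶠ (x : {q : R × R // q.1 + q.2 = r}),
    P r A B x ≫ ((bang x.1.1).map (in₀ A B) ⊗ₘ (bang x.1.2).map (in₁ A B))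
      ≫ cb x.1.1 x.1.2 (bp A B) ≫ bc bang x.2 (bp A B)

/-!
Write `ι₀, ι₁, π₀, π₁` for the biproduct structure of `A ⊕ B`. By the bimonoid law,
`(!_s ι₀ ⊗ !_t ι₁) ; c̄_{s,t} ; c_{s',t'} ; (!_{s'} π₀ ⊗ !_{t'} π₁)` is a sum over the splittings
`s = a + b`, `t = e + f`, `s' = a + e`, `t' = b + f` of terms containing the factors
`!_e(ι₁ ; π₀) = !_e(0)` and `!_b(ι₀ ; π₁) = !_b(0)`, which vanish unless `b = e = 0`; the surviving
term is the identity by the unit and counit laws. So this composite is `1` when `(s,t) = (s',t')`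
and `0` otherwise, which gives `χ⁻¹ ; χ = 1`. Conversely, additivity of `!_r` gives
`χ ; χ⁻¹ = Σ_{s+t=r} c_{s,t} ; (!_s(π₀ ; ι₀) ⊗ !_t(π₁ ; ι₁)) ; c̄_{s,t} = !_r(π₀ ; ι₀ + π₁ ; ι₁)`,
which is `!_r(1) = 1`.
Naturality only uses naturality of `c` and `(f ⊕ g) ; πᵢ = πᵢ ; fᵢ`, and on a zero object
`w ; w̄ = !_0(0) = !_0(1) = 1`.
-/

section FiniteSums

variable {C : Type u} [Category.{v} C] [MonoidalCategory C] [∀ X Y : C, AddCommMonoid (X ⟶ Y)]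
  [AdditiveMonoidal C] {X Y Z : C}

namespace AdditiveMonoidal

def leftComp (f : X ⟶ Y) : (Y ⟶ Z) →+ (X ⟶ Z) where
  toFun g := f ≫ g
  map_zero' := comp_zero f
  map_add' := comp_add f

def rightComp (g : Y ⟶ Z) : (X ⟶ Y) →+ (X ⟶ Z) where
  toFun f := f ≫ g
  map_zero' := zero_comp g
  map_add' f f' := add_comp f f' g

variable {ι : Type} [Finite ι]

lemma finsum_comp (f : ι → (X ⟶ Y)) (g : Y ⟶ Z) : (∑ᶠ i, f i) ≫ g = ∑ᶠ i, f i ≫ g :=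
  (rightComp g).map_finsum (Set.toFinite _)

lemma comp_finsum (f : X ⟶ Y) (g : ι → (Y ⟶ Z)) : f ≫ (∑ᶠ i, g i) = ∑ᶠ i, f ≫ g i :=
  (leftComp f).map_finsum (Set.toFinite _)

lemma finsum_comp_finsum_of_ne (f : ι → (X ⟶ Y)) (g : ι → (Y ⟶ Z))
    (h : ∀ i j, i ≠ j → f i ≫ g j = 0) : (∑ᶠ i, f i) ≫ (∑ᶠ j, g j) = ∑ᶠ i, f i ≫ g i := by
  rw [finsum_comp]
  refine finsum_congr fun i => ?_
  rw [comp_finsum, finsum_eq_single _ i fun j hj => h i j hj.symm]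

lemma finsum_comp_finsum_of_orthonormal [DecidableEq ι] {W : C} {V : ι → C} (f : ∀ i, X ⟶ V i)
    (J : ∀ i, V i ⟶ Z) (P : ∀ i, Z ⟶ V i) (g : ∀ i, V i ⟶ W)
    (hJP : ∀ i j, J i ≫ P j = if h : i = j then eqToHom (congrArg V h) else 0) :
    (∑ᶠ i, f i ≫ J i) ≫ (∑ᶠ j, P j ≫ g j) = ∑ᶠ i, f i ≫ g i := by
  rw [finsum_comp_finsum_of_ne]
  · refine finsum_congr fun i => ?_
    rw [Category.assoc, ← Category.assoc (J i), hJP, dif_pos rfl, eqToHom_refl, Category.id_comp]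
  · intro i j hij
    rw [Category.assoc, ← Category.assoc (J i), hJP, dif_neg hij, zero_comp, comp_zero]

end AdditiveMonoidal

end FiniteSums

section Braided

variable {C : Type u} [Category.{v} C] [MonoidalCategory C] [BraidedCategory C]

lemma tensorμ_tensorUnit (X Y : C) : tensorμ X (𝟙_ C) (𝟙_ C) Y = 𝟙 _ := by
  have hβ : (β_ (𝟙_ C) (𝟙_ C)).hom = 𝟙 _ := by
    rw [braiding_tensorUnit_left, unitors_equal, Iso.hom_inv_id]
  rw [tensorμ, hβ]
  monoidal

lemma tensorμ_comp_tensorHom_unitors {X Y Z W : C} (k : Y ⟶ 𝟙_ C) (l : Z ⟶ 𝟙_ C) :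
    tensorμ X Y Z W ≫ (((𝟙 X ⊗ₘ l) ≫ (ρ_ X).hom) ⊗ₘ ((k ⊗ₘ 𝟙 W) ≫ (λ_ W).hom))
      = ((𝟙 X ⊗ₘ k) ≫ (ρ_ X).hom) ⊗ₘ ((l ⊗ₘ 𝟙 W) ≫ (λ_ W).hom) := by
  rw [← tensorHom_comp_tensorHom, ← Category.assoc, ← tensorμ_natural, Category.assoc,
    tensorμ_tensorUnit, Category.id_comp, tensorHom_comp_tensorHom]

end Braided

section GradeCast

variable {R : Type} {C : Type u} [Category.{v} C] (bang : R → C ⥤ C)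

lemma bc_rfl {r : R} (h : r = r) (A : C) : bc bang h A = 𝟙 _ := rfl

lemma bc_trans {r s t : R} (h : r = s) (h' : s = t) (A : C) :
    bc bang h A ≫ bc bang h' A = bc bang (h.trans h') A := by
  subst h h'; exact Category.id_comp _

lemma bc_trans_assoc {r s t : R} (h : r = s) (h' : s = t) (A : C) {Y : C}
    (k : (bang t).obj A ⟶ Y) : bc bang h A ≫ bc bang h' A ≫ k = bc bang (h.trans h') A ≫ k := by
  rw [← Category.assoc, bc_trans]

lemma bc_naturality {r s : R} (h : r = s) {A B : C} (f : A ⟶ B) :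
    bc bang h A ≫ (bang s).map f = (bang r).map f ≫ bc bang h B := by
  subst h; simp [bc_rfl]

end GradeCast

instance FAS.finite_antidiagonal {R : Type} [Semiring R] [FAS R] (r : R) :
    Finite {q : R × R // q.1 + q.2 = r} :=
  (FAS.finite_antidiag r).to_subtype

instance FAS.finite_bimonoidIndex {R : Type} [Semiring R] [FAS R] (r s t u : R) :
    Finite {q : (R × R) × (R × R) //
      q.1.1 + q.1.2 = r ∧ q.2.1 + q.2.2 = s ∧ q.1.1 + q.2.1 = t ∧ q.1.2 + q.2.2 = u} :=
  Finite.of_injective (fun q => ((⟨q.1.1, q.2.1⟩ : {a : R × R // a.1 + a.2 = r}),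
      (⟨q.1.2, q.2.2.1⟩ : {a : R × R // a.1 + a.2 = s})))
    fun _ _ h => Subtype.ext (Prod.ext (congrArg (·.1.1) h) (congrArg (·.2.1) h))

section Components

variable {R : Type} [Semiring R] {C : Type u} [Category.{v} C] [MonoidalCategory C]
  (bang : R → C ⥤ C)
  (c : ∀ (r s : R) (A : C), (bang (r + s)).obj A ⟶ (bang r).obj A ⊗ (bang s).obj A)
  (cb : ∀ (r s : R) (A : C), (bang r).obj A ⊗ (bang s).obj A ⟶ (bang (r + s)).obj A)

/-- The `x = (s, t)` components of `χ⊗_r` and of its inverse, with arbitrary maps in place of the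
biproduct projections and injections. -/
def seelyProj {X A B : C} (π₀ : X ⟶ A) (π₁ : X ⟶ B) {r : R} (x : {q : R × R // q.1 + q.2 = r}) :
    (bang r).obj X ⟶ (bang x.1.1).obj A ⊗ (bang x.1.2).obj B :=
  bc bang x.2.symm X ≫ c x.1.1 x.1.2 X ≫ ((bang x.1.1).map π₀ ⊗ₘ (bang x.1.2).map π₁)

def seelyIncl {X A B : C} (ι₀ : A ⟶ X) (ι₁ : B ⟶ X) {r : R} (x : {q : R × R // q.1 + q.2 = r}) :
    (bang x.1.1).obj A ⊗ (bang x.1.2).obj B ⟶ (bang r).obj X :=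
  ((bang x.1.1).map ι₀ ⊗ₘ (bang x.1.2).map ι₁) ≫ cb x.1.1 x.1.2 X ≫ bc bang x.2 X

lemma seelyProj_comp_tensorHom {X A B A' B' : C} (π₀ : X ⟶ A) (π₁ : X ⟶ B) (f : A ⟶ A')
    (g : B ⟶ B') {r : R} (x : {q : R × R // q.1 + q.2 = r}) :
    seelyProj bang c π₀ π₁ x ≫ ((bang x.1.1).map f ⊗ₘ (bang x.1.2).map g)
      = seelyProj bang c (π₀ ≫ f) (π₁ ≫ g) x := by
  simp only [seelyProj, Category.assoc, tensorHom_comp_tensorHom, Functor.map_comp]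

lemma seelyProj_comp_seelyIncl {X A B Y : C} (π₀ : X ⟶ A) (π₁ : X ⟶ B) (ι₀ : A ⟶ Y)
    (ι₁ : B ⟶ Y) {r : R} (x : {q : R × R // q.1 + q.2 = r}) :
    seelyProj bang c π₀ π₁ x ≫ seelyIncl bang cb ι₀ ι₁ x
      = bc bang x.2.symm X ≫ c x.1.1 x.1.2 X
          ≫ ((bang x.1.1).map (π₀ ≫ ι₀) ⊗ₘ (bang x.1.2).map (π₁ ≫ ι₁))
          ≫ cb x.1.1 x.1.2 Y ≫ bc bang x.2 Y := by
  simp only [seelyProj, seelyIncl, Category.assoc, tensorHom_comp_tensorHom_assoc,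
    Functor.map_comp]

lemma seelyIncl_comp_seelyProj {X A B A' B' : C} (ι₀ : A ⟶ X) (ι₁ : B ⟶ X) (π₀ : X ⟶ A')
    (π₁ : X ⟶ B') {r : R} (x y : {q : R × R // q.1 + q.2 = r}) :
    seelyIncl bang cb ι₀ ι₁ x ≫ seelyProj bang c π₀ π₁ y
      = ((bang x.1.1).map ι₀ ⊗ₘ (bang x.1.2).map ι₁) ≫ cb x.1.1 x.1.2 X
          ≫ bc bang (x.2.trans y.2.symm) X ≫ c y.1.1 y.1.2 X
          ≫ ((bang y.1.1).map π₀ ⊗ₘ (bang y.1.2).map π₁) := by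
  simp only [seelyIncl, seelyProj, Category.assoc, bc_trans_assoc]

variable [∀ X Y : C, AddCommMonoid (X ⟶ Y)] (bp : C → C → C) (bb : R → C → C → C)

lemma seelyMap_eq_finsum (pr₀ : ∀ A B : C, bp A B ⟶ A) (pr₁ : ∀ A B : C, bp A B ⟶ B)
    (J : ∀ (r : R) (A B : C) (x : {q : R × R // q.1 + q.2 = r}),
      (bang x.1.1).obj A ⊗ (bang x.1.2).obj B ⟶ bb r A B) (r : R) (A B : C) :
    seelyMap bang c bp pr₀ pr₁ bb J r A B
      = ∑ᶠ x, seelyProj bang c (pr₀ A B) (pr₁ A B) x ≫ J r A B x := by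
  simp only [seelyMap, seelyProj, Category.assoc]

lemma seelyInv_eq_finsum (in₀ : ∀ A B : C, A ⟶ bp A B) (in₁ : ∀ A B : C, B ⟶ bp A B)
    (P : ∀ (r : R) (A B : C) (x : {q : R × R // q.1 + q.2 = r}),
      bb r A B ⟶ (bang x.1.1).obj A ⊗ (bang x.1.2).obj B) (r : R) (A B : C) :
    seelyInv bang cb bp in₀ in₁ bb P r A B
      = ∑ᶠ x, P r A B x ≫ seelyIncl bang cb (in₀ A B) (in₁ A B) x := by
  simp only [seelyInv, seelyIncl]

end Components

/-- The summand of `IsGradedAdditiveBialgebraModality.bimonoid` indexed by `((a, b), (e, f))`. -/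
def bimonoidTerm (bang : R → C ⥤ C)
    (c : ∀ (r s : R) (A : C), (bang (r + s)).obj A ⟶ (bang r).obj A ⊗ (bang s).obj A)
    (cb : ∀ (r s : R) (A : C), (bang r).obj A ⊗ (bang s).obj A ⟶ (bang (r + s)).obj A)
    {r s t u : R} (q : {q : (R × R) × (R × R) //
      q.1.1 + q.1.2 = r ∧ q.2.1 + q.2.2 = s ∧ q.1.1 + q.2.1 = t ∧ q.1.2 + q.2.2 = u})
    (A : C) : (bang r).obj A ⊗ (bang s).obj A ⟶ (bang t).obj A ⊗ (bang u).obj A :=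
  ((bc bang q.2.1.symm A ≫ c q.1.1.1 q.1.1.2 A)
      ⊗ₘ (bc bang q.2.2.1.symm A ≫ c q.1.2.1 q.1.2.2 A))
    ≫ tensorμ _ _ _ _
    ≫ ((cb q.1.1.1 q.1.2.1 A ≫ bc bang q.2.2.2.1 A)
      ⊗ₘ (cb q.1.1.2 q.1.2.2 A ≫ bc bang q.2.2.2.2 A))

namespace IsGradedAdditiveBialgebraModality

variable {bang : R → C ⥤ C}
  {p : ∀ (r s : R) (A : C), (bang (r * s)).obj A ⟶ (bang r).obj ((bang s).obj A)}
  {c : ∀ (r s : R) (A : C), (bang (r + s)).obj A ⟶ (bang r).obj A ⊗ (bang s).obj A}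
  {d : ∀ A : C, (bang 1).obj A ⟶ A} {w : ∀ A : C, (bang 0).obj A ⟶ 𝟙_ C}
  {cb : ∀ (r s : R) (A : C), (bang r).obj A ⊗ (bang s).obj A ⟶ (bang (r + s)).obj A}
  {wb : ∀ A : C, 𝟙_ C ⟶ (bang 0).obj A}

lemma map_zero_of_ne (hmod : IsGradedAdditiveBialgebraModality bang p c d w cb wb) {r : R}
    (hr : r ≠ 0) (A B : C) : (bang r).map (0 : A ⟶ B) = 0 := by
  rw [hmod.map_zero, dif_neg hr]

lemma map_zero_eq_w_comp_wb (hmod : IsGradedAdditiveBialgebraModality bang p c d w cb wb)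
    (A B : C) : (bang 0).map (0 : A ⟶ B) = w A ≫ wb B := by
  rw [hmod.map_zero, dif_pos rfl, bc_rfl, bc_rfl, Category.id_comp, Category.comp_id]

lemma w_comp_wb_of_isZero (hmod : IsGradedAdditiveBialgebraModality bang p c d w cb wb) {Z : C}
    (hZ : IsZero Z) : w Z ≫ wb Z = 𝟙 ((bang 0).obj Z) := by
  rw [← hmod.map_zero_eq_w_comp_wb, ← hZ.eq_of_src (𝟙 Z) 0, CategoryTheory.Functor.map_id]

lemma map_comp_bc_comp_c (hmod : IsGradedAdditiveBialgebraModality bang p c d w cb wb)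
    {a b r : R} (h : a + b = r) {A X : C} (f : A ⟶ X) :
    (bang r).map f ≫ bc bang h.symm X ≫ c a b X
      = bc bang h.symm A ≫ c a b A ≫ ((bang a).map f ⊗ₘ (bang b).map f) := by
  rw [← Category.assoc, ← bc_naturality, Category.assoc, hmod.toCoalgebra.c_natural]

lemma cb_comp_bc_comp_map (hmod : IsGradedAdditiveBialgebraModality bang p c d w cb wb)
    {a b r : R} (h : a + b = r) {X A : C} (f : X ⟶ A) :
    cb a b X ≫ bc bang h X ≫ (bang r).map f
      = ((bang a).map f ⊗ₘ (bang b).map f) ≫ cb a b A ≫ bc bang h A := by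
  rw [bc_naturality, ← Category.assoc, ← hmod.cb_natural, Category.assoc]

lemma map_comp_seelyProj (hmod : IsGradedAdditiveBialgebraModality bang p c d w cb wb)
    {Y X A B : C} (f : Y ⟶ X) (π₀ : X ⟶ A) (π₁ : X ⟶ B) {r : R}
    (x : {q : R × R // q.1 + q.2 = r}) :
    (bang r).map f ≫ seelyProj bang c π₀ π₁ x = seelyProj bang c (f ≫ π₀) (f ≫ π₁) x := by
  rw [seelyProj, ← Category.assoc, ← Category.assoc, Category.assoc _ (bc _ _ _),
    hmod.map_comp_bc_comp_c x.2]
  simp only [seelyProj, Category.assoc, tensorHom_comp_tensorHom, Functor.map_comp]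

lemma finsum_seelyProj_comp_seelyIncl [FAS R]
    (hmod : IsGradedAdditiveBialgebraModality bang p c d w cb wb) {X A B Y : C}
    (π₀ : X ⟶ A) (π₁ : X ⟶ B) (ι₀ : A ⟶ Y) (ι₁ : B ⟶ Y) (r : R) :
    ∑ᶠ x : {q : R × R // q.1 + q.2 = r}, seelyProj bang c π₀ π₁ x ≫ seelyIncl bang cb ι₀ ι₁ x
      = (bang r).map (π₀ ≫ ι₀ + π₁ ≫ ι₁) := by
  simp only [seelyProj_comp_seelyIncl, hmod.map_add]

lemma sandwich_bimonoidTerm (hmod : IsGradedAdditiveBialgebraModality bang p c d w cb wb)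
    {r s t u : R} (q : {q : (R × R) × (R × R) //
      q.1.1 + q.1.2 = r ∧ q.2.1 + q.2.2 = s ∧ q.1.1 + q.2.1 = t ∧ q.1.2 + q.2.2 = u})
    {X A B A' B' : C} (ι₀ : A ⟶ X) (ι₁ : B ⟶ X) (π₀ : X ⟶ A') (π₁ : X ⟶ B') :
    ((bang r).map ι₀ ⊗ₘ (bang s).map ι₁) ≫ bimonoidTerm bang c cb q X
        ≫ ((bang t).map π₀ ⊗ₘ (bang u).map π₁)
      = ((bc bang q.2.1.symm A ≫ c q.1.1.1 q.1.1.2 A)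
            ⊗ₘ (bc bang q.2.2.1.symm B ≫ c q.1.2.1 q.1.2.2 B))
          ≫ tensorμ _ _ _ _
          ≫ ((((bang q.1.1.1).map (ι₀ ≫ π₀) ⊗ₘ (bang q.1.2.1).map (ι₁ ≫ π₀))
                ≫ cb q.1.1.1 q.1.2.1 A' ≫ bc bang q.2.2.2.1 A')
            ⊗ₘ (((bang q.1.1.2).map (ι₀ ≫ π₁) ⊗ₘ (bang q.1.2.2).map (ι₁ ≫ π₁))
                ≫ cb q.1.1.2 q.1.2.2 B' ≫ bc bang q.2.2.2.2 B')) := by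
  obtain ⟨⟨⟨a, b⟩, e, f⟩, hab, hef, hae, hbf⟩ := q
  calc _ = (((bang r).map ι₀ ≫ bc bang hab.symm X ≫ c a b X)
            ⊗ₘ ((bang s).map ι₁ ≫ bc bang hef.symm X ≫ c e f X))
          ≫ tensorμ _ _ _ _
          ≫ ((cb a e X ≫ bc bang hae X ≫ (bang t).map π₀)
            ⊗ₘ (cb b f X ≫ bc bang hbf X ≫ (bang u).map π₁)) := by
        simp only [bimonoidTerm, ← tensorHom_comp_tensorHom, Category.assoc]
    _ = _ := by
        rw [hmod.map_comp_bc_comp_c hab, hmod.map_comp_bc_comp_c hef,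
          hmod.cb_comp_bc_comp_map hae, hmod.cb_comp_bc_comp_map hbf]
        simp only [← tensorHom_comp_tensorHom, Category.assoc, tensorμ_natural_assoc]
        simp only [tensorHom_comp_tensorHom_assoc, Functor.map_comp]

lemma sandwich_bimonoidTerm_eq_zero [AdditiveMonoidal C]
    (hmod : IsGradedAdditiveBialgebraModality bang p c d w cb wb)
    {r s t u : R} (q : {q : (R × R) × (R × R) //
      q.1.1 + q.1.2 = r ∧ q.2.1 + q.2.2 = s ∧ q.1.1 + q.2.1 = t ∧ q.1.2 + q.2.2 = u})
    {X A B A' B' : C} {ι₀ : A ⟶ X} {ι₁ : B ⟶ X} {π₀ : X ⟶ A'} {π₁ : X ⟶ B'}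
    (h₀₁ : ι₀ ≫ π₁ = 0) (h₁₀ : ι₁ ≫ π₀ = 0) (hq : q.1.1.2 ≠ 0 ∨ q.1.2.1 ≠ 0) :
    ((bang r).map ι₀ ⊗ₘ (bang s).map ι₁) ≫ bimonoidTerm bang c cb q X
        ≫ ((bang t).map π₀ ⊗ₘ (bang u).map π₁) = 0 := by
  rw [hmod.sandwich_bimonoidTerm, h₀₁, h₁₀]
  rcases hq with h | h <;>
    simp only [hmod.map_zero_of_ne h, AdditiveMonoidal.zero_tensor, AdditiveMonoidal.tensor_zero,
      AdditiveMonoidal.zero_comp, AdditiveMonoidal.comp_zero]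

lemma sandwich_bimonoidTerm_eq_id (hmod : IsGradedAdditiveBialgebraModality bang p c d w cb wb)
    (s t : R) {X A B : C} {ι₀ : A ⟶ X} {ι₁ : B ⟶ X} {π₀ : X ⟶ A} {π₁ : X ⟶ B}
    (h₀₀ : ι₀ ≫ π₀ = 𝟙 A) (h₀₁ : ι₀ ≫ π₁ = 0) (h₁₀ : ι₁ ≫ π₀ = 0) (h₁₁ : ι₁ ≫ π₁ = 𝟙 B) :
    ((bang s).map ι₀ ⊗ₘ (bang t).map ι₁)
        ≫ bimonoidTerm bang c cb
            ⟨((s, 0), (0, t)), add_zero s, zero_add t, add_zero s, zero_add t⟩ X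
        ≫ ((bang s).map π₀ ⊗ₘ (bang t).map π₁) = 𝟙 _ := by
  have unit_right : (𝟙 ((bang s).obj A) ⊗ₘ (w B ≫ wb A)) ≫ cb s 0 A ≫ bc bang (add_zero s) A
      = (𝟙 _ ⊗ₘ w B) ≫ (ρ_ _).hom := by
    rw [← Category.comp_id (𝟙 ((bang s).obj A)), ← tensorHom_comp_tensorHom_assoc,
      ← Category.assoc _ (cb s 0 A), hmod.cb_unit_right, Category.assoc, bc_trans, bc_rfl,
      Category.comp_id, Category.comp_id]
  have unit_left : ((w A ≫ wb B) ⊗ₘ 𝟙 ((bang t).obj B)) ≫ cb 0 t B ≫ bc bang (zero_add t) B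
      = (w A ⊗ₘ 𝟙 _) ≫ (λ_ _).hom := by
    rw [← Category.comp_id (𝟙 ((bang t).obj B)), ← tensorHom_comp_tensorHom_assoc,
      ← Category.assoc _ (cb 0 t B), hmod.cb_unit_left, Category.assoc, bc_trans, bc_rfl,
      Category.comp_id, Category.comp_id]
  calc _ = ((bc bang (add_zero s).symm A ≫ c s 0 A) ⊗ₘ (bc bang (zero_add t).symm B ≫ c 0 t B))
          ≫ tensorμ _ _ _ _
          ≫ (((𝟙 _ ⊗ₘ w B) ≫ (ρ_ _).hom) ⊗ₘ ((w A ⊗ₘ 𝟙 _) ≫ (λ_ _).hom)) := by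
        rw [hmod.sandwich_bimonoidTerm, h₀₀, h₀₁, h₁₀, h₁₁, CategoryTheory.Functor.map_id,
          CategoryTheory.Functor.map_id, hmod.map_zero_eq_w_comp_wb, hmod.map_zero_eq_w_comp_wb]
        exact congrArg (fun k => _ ≫ _ ≫ k) (congrArg₂ (· ⊗ₘ ·) unit_right unit_left)
    _ = (bc bang (add_zero s).symm A ≫ c s 0 A ≫ (𝟙 _ ⊗ₘ w A) ≫ (ρ_ _).hom)
          ⊗ₘ (bc bang (zero_add t).symm B ≫ c 0 t B ≫ (w B ⊗ₘ 𝟙 _) ≫ (λ_ _).hom) := by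
        rw [tensorμ_comp_tensorHom_unitors, tensorHom_comp_tensorHom]
        simp only [Category.assoc]
    _ = 𝟙 _ := by
        rw [hmod.toCoalgebra.c_counit_right, hmod.toCoalgebra.c_counit_left, bc_trans, bc_trans,
          bc_rfl, bc_rfl, id_tensorHom_id]

lemma sandwich_cb_c_eq_finsum [FAS R] [AdditiveMonoidal C]
    (hmod : IsGradedAdditiveBialgebraModality bang p c d w cb wb) {r s t u : R}
    (h : r + s = t + u) {X A B A' B' : C} (ι₀ : A ⟶ X) (ι₁ : B ⟶ X) (π₀ : X ⟶ A')
    (π₁ : X ⟶ B') :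
    ((bang r).map ι₀ ⊗ₘ (bang s).map ι₁) ≫ cb r s X ≫ bc bang h X ≫ c t u X
        ≫ ((bang t).map π₀ ⊗ₘ (bang u).map π₁)
      = ∑ᶠ q, ((bang r).map ι₀ ⊗ₘ (bang s).map ι₁) ≫ bimonoidTerm bang c cb q X
          ≫ ((bang t).map π₀ ⊗ₘ (bang u).map π₁) := by
  calc _ = ((bang r).map ι₀ ⊗ₘ (bang s).map ι₁) ≫ (cb r s X ≫ bc bang h X ≫ c t u X)
        ≫ ((bang t).map π₀ ⊗ₘ (bang u).map π₁) := by simp only [Category.assoc]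
    _ = _ := by
      rw [hmod.bimonoid, AdditiveMonoidal.finsum_comp, AdditiveMonoidal.comp_finsum]
      rfl

lemma seelyIncl_comp_seelyProj_of_ne [FAS R] [AdditiveMonoidal C]
    (hmod : IsGradedAdditiveBialgebraModality bang p c d w cb wb) {X A B A' B' : C}
    {ι₀ : A ⟶ X} {ι₁ : B ⟶ X} {π₀ : X ⟶ A'} {π₁ : X ⟶ B'}
    (h₀₁ : ι₀ ≫ π₁ = 0) (h₁₀ : ι₁ ≫ π₀ = 0) {r : R} {x y : {q : R × R // q.1 + q.2 = r}}
    (hxy : x ≠ y) : seelyIncl bang cb ι₀ ι₁ x ≫ seelyProj bang c π₀ π₁ y = 0 := by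
  rw [seelyIncl_comp_seelyProj, hmod.sandwich_cb_c_eq_finsum]
  refine finsum_eq_zero_of_forall_eq_zero fun q => hmod.sandwich_bimonoidTerm_eq_zero q h₀₁ h₁₀ ?_
  obtain ⟨⟨⟨a, b⟩, e, f⟩, hab, hef, hae, hbf⟩ := q
  refine not_and_or.mp ?_
  rintro ⟨rfl, rfl⟩
  dsimp only at hab hef hae hbf
  rw [add_zero] at hab hae
  rw [zero_add] at hef hbf
  exact hxy (Subtype.ext (Prod.ext (hab.symm.trans hae) (hef.symm.trans hbf)))

lemma seelyIncl_comp_seelyProj_self [FAS R] [AdditiveMonoidal C]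
    (hmod : IsGradedAdditiveBialgebraModality bang p c d w cb wb) {X A B : C}
    {ι₀ : A ⟶ X} {ι₁ : B ⟶ X} {π₀ : X ⟶ A} {π₁ : X ⟶ B}
    (h₀₀ : ι₀ ≫ π₀ = 𝟙 A) (h₀₁ : ι₀ ≫ π₁ = 0) (h₁₀ : ι₁ ≫ π₀ = 0) (h₁₁ : ι₁ ≫ π₁ = 𝟙 B)
    {r : R} (x : {q : R × R // q.1 + q.2 = r}) :
    seelyIncl bang cb ι₀ ι₁ x ≫ seelyProj bang c π₀ π₁ x = 𝟙 _ := by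
  rw [seelyIncl_comp_seelyProj, hmod.sandwich_cb_c_eq_finsum,
    finsum_eq_single _ ⟨((x.1.1, 0), (0, x.1.2)), add_zero _, zero_add _, add_zero _, zero_add _⟩]
  · exact hmod.sandwich_bimonoidTerm_eq_id _ _ h₀₀ h₀₁ h₁₀ h₁₁
  · rintro ⟨⟨⟨a, b⟩, e, f⟩, hab, hef, hae, hbf⟩ hq
    refine hmod.sandwich_bimonoidTerm_eq_zero _ h₀₁ h₁₀ (not_and_or.mp ?_)
    rintro ⟨rfl, rfl⟩
    dsimp only at hab hef
    rw [add_zero] at hab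
    rw [zero_add] at hef
    subst hab hef
    exact hq rfl

end IsGradedAdditiveBialgebraModality

section Seely

variable [FAS R] [AdditiveMonoidal C] {bang : R → C ⥤ C}
  {p : ∀ (r s : R) (A : C), (bang (r * s)).obj A ⟶ (bang r).obj ((bang s).obj A)}
  {c : ∀ (r s : R) (A : C), (bang (r + s)).obj A ⟶ (bang r).obj A ⊗ (bang s).obj A}
  {d : ∀ A : C, (bang 1).obj A ⟶ A} {w : ∀ A : C, (bang 0).obj A ⟶ 𝟙_ C}
  {cb : ∀ (r s : R) (A : C), (bang r).obj A ⊗ (bang s).obj A ⟶ (bang (r + s)).obj A}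
  {wb : ∀ A : C, 𝟙_ C ⟶ (bang 0).obj A}
  {bp : C → C → C} {pr₀ : ∀ A B : C, bp A B ⟶ A} {pr₁ : ∀ A B : C, bp A B ⟶ B}
  {in₀ : ∀ A B : C, A ⟶ bp A B} {in₁ : ∀ A B : C, B ⟶ bp A B} {bb : R → C → C → C}
  {P : ∀ (r : R) (A B : C) (x : {q : R × R // q.1 + q.2 = r}),
    bb r A B ⟶ (bang x.1.1).obj A ⊗ (bang x.1.2).obj B}
  {J : ∀ (r : R) (A B : C) (x : {q : R × R // q.1 + q.2 = r}),
    (bang x.1.1).obj A ⊗ (bang x.1.2).obj B ⟶ bb r A B}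

lemma seelyMap_comp_seelyInv (hmod : IsGradedAdditiveBialgebraModality bang p c d w cb wb)
    (hbp : ∀ A B : C, pr₀ A B ≫ in₀ A B + pr₁ A B ≫ in₁ A B = 𝟙 (bp A B))
    (hJP : ∀ (r : R) (A B : C) (x y : {q : R × R // q.1 + q.2 = r}),
      J r A B x ≫ P r A B y = if hxy : x = y then eqToHom (by rw [hxy]) else 0)
    (r : R) (A B : C) :
    seelyMap bang c bp pr₀ pr₁ bb J r A B ≫ seelyInv bang cb bp in₀ in₁ bb P r A B
      = 𝟙 ((bang r).obj (bp A B)) := by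
  rw [seelyMap_eq_finsum, seelyInv_eq_finsum,
    AdditiveMonoidal.finsum_comp_finsum_of_orthonormal _ _ _ _ (hJP r A B),
    hmod.finsum_seelyProj_comp_seelyIncl, hbp, CategoryTheory.Functor.map_id]

lemma seelyInv_comp_seelyMap (hmod : IsGradedAdditiveBialgebraModality bang p c d w cb wb)
    (h00 : ∀ A B : C, in₀ A B ≫ pr₀ A B = 𝟙 A) (h01 : ∀ A B : C, in₀ A B ≫ pr₁ A B = 0)
    (h10 : ∀ A B : C, in₁ A B ≫ pr₀ A B = 0) (h11 : ∀ A B : C, in₁ A B ≫ pr₁ A B = 𝟙 B)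
    (hPJ : ∀ (r : R) (A B : C),
      ∑ᶠ (x : {q : R × R // q.1 + q.2 = r}), P r A B x ≫ J r A B x = 𝟙 (bb r A B))
    (r : R) (A B : C) :
    seelyInv bang cb bp in₀ in₁ bb P r A B ≫ seelyMap bang c bp pr₀ pr₁ bb J r A B
      = 𝟙 (bb r A B) := by
  rw [seelyInv_eq_finsum, seelyMap_eq_finsum, AdditiveMonoidal.finsum_comp_finsum_of_ne]
  · refine (finsum_congr fun x => ?_).trans (hPJ r A B)
    rw [Category.assoc, ← Category.assoc (seelyIncl _ _ _ _ x),
      hmod.seelyIncl_comp_seelyProj_self (h00 A B) (h01 A B) (h10 A B) (h11 A B),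
      Category.id_comp]
  · intro x y hxy
    rw [Category.assoc, ← Category.assoc (seelyIncl _ _ _ _ x),
      hmod.seelyIncl_comp_seelyProj_of_ne (h01 A B) (h10 A B) hxy, AdditiveMonoidal.zero_comp,
      AdditiveMonoidal.comp_zero]

lemma seelyMap_naturality (hmod : IsGradedAdditiveBialgebraModality bang p c d w cb wb)
    (h00 : ∀ A B : C, in₀ A B ≫ pr₀ A B = 𝟙 A) (h01 : ∀ A B : C, in₀ A B ≫ pr₁ A B = 0)
    (h10 : ∀ A B : C, in₁ A B ≫ pr₀ A B = 0) (h11 : ∀ A B : C, in₁ A B ≫ pr₁ A B = 𝟙 B)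
    (hJP : ∀ (r : R) (A B : C) (x y : {q : R × R // q.1 + q.2 = r}),
      J r A B x ≫ P r A B y = if hxy : x = y then eqToHom (by rw [hxy]) else 0)
    (r : R) {A A' B B' : C} (f : A ⟶ A') (g : B ⟶ B') :
    (bang r).map (pr₀ A B ≫ f ≫ in₀ A' B' + pr₁ A B ≫ g ≫ in₁ A' B')
        ≫ seelyMap bang c bp pr₀ pr₁ bb J r A' B'
      = seelyMap bang c bp pr₀ pr₁ bb J r A B
          ≫ ∑ᶠ (x : {q : R × R // q.1 + q.2 = r}),
              P r A B x ≫ ((bang x.1.1).map f ⊗ₘ (bang x.1.2).map g) ≫ J r A' B' x := by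
  have hpr₀ : (pr₀ A B ≫ f ≫ in₀ A' B' + pr₁ A B ≫ g ≫ in₁ A' B') ≫ pr₀ A' B' = pr₀ A B ≫ f := by
    simp only [AdditiveMonoidal.add_comp, Category.assoc, h00, h10, Category.comp_id,
      AdditiveMonoidal.comp_zero, add_zero]
  have hpr₁ : (pr₀ A B ≫ f ≫ in₀ A' B' + pr₁ A B ≫ g ≫ in₁ A' B') ≫ pr₁ A' B' = pr₁ A B ≫ g := by
    simp only [AdditiveMonoidal.add_comp, Category.assoc, h01, h11, Category.comp_id,
      AdditiveMonoidal.comp_zero, zero_add]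
  rw [seelyMap_eq_finsum, seelyMap_eq_finsum, AdditiveMonoidal.comp_finsum,
    AdditiveMonoidal.finsum_comp_finsum_of_orthonormal _ _ _ _ (hJP r A B)]
  refine finsum_congr fun x => ?_
  rw [← Category.assoc, hmod.map_comp_seelyProj, hpr₀, hpr₁, ← seelyProj_comp_tensorHom,
    Category.assoc]

end Seely

/-- **The graded Seely isomorphisms.** Let `R` be a f.a.s. semiring and
`(bang, p, c, d, w, cb, wb)` an `R`-graded additive bialgebra modality on an additive
symmetric monoidal category with finite biproducts (binary biproducts `bp` and, for each
`r`, a biproduct `bb r A B` of the family `!_s A ⊗ !_t B` indexed by `{(s,t) | s+t=r}`)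
and a zero object `Z`. Then `χ⊗_r := Σ_{s+t=r} c_{s,t};(!_s(π₀)⊗!_t(π₁));ι_{s,t}` and
`χI := w : !_0 Z ⟶ I` are natural isomorphisms, with the indicated inverses. -/
theorem graded_seely_isomorphism
    {R : Type} [Semiring R] [DecidableEq R] [FAS R]
    {C : Type u} [Category.{v} C] [MonoidalCategory C] [SymmetricCategory C]
    [∀ X Y : C, AddCommMonoid (X ⟶ Y)] [AdditiveMonoidal C]
    (bang : R → C ⥤ C)
    (p : ∀ (r s : R) (A : C), (bang (r * s)).obj A ⟶ (bang r).obj ((bang s).obj A))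
    (c : ∀ (r s : R) (A : C), (bang (r + s)).obj A ⟶ (bang r).obj A ⊗ (bang s).obj A)
    (d : ∀ A : C, (bang 1).obj A ⟶ A)
    (w : ∀ A : C, (bang 0).obj A ⟶ 𝟙_ C)
    (cb : ∀ (r s : R) (A : C), (bang r).obj A ⊗ (bang s).obj A ⟶ (bang (r + s)).obj A)
    (wb : ∀ A : C, 𝟙_ C ⟶ (bang 0).obj A)
    (hmod : IsGradedAdditiveBialgebraModality bang p c d w cb wb)
    -- binary biproducts
    (bp : C → C → C)
    (pr₀ : ∀ A B : C, bp A B ⟶ A) (pr₁ : ∀ A B : C, bp A B ⟶ B)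
    (in₀ : ∀ A B : C, A ⟶ bp A B) (in₁ : ∀ A B : C, B ⟶ bp A B)
    (h00 : ∀ A B : C, in₀ A B ≫ pr₀ A B = 𝟙 A) (h01 : ∀ A B : C, in₀ A B ≫ pr₁ A B = 0)
    (h10 : ∀ A B : C, in₁ A B ≫ pr₀ A B = 0) (h11 : ∀ A B : C, in₁ A B ≫ pr₁ A B = 𝟙 B)
    (hbp : ∀ A B : C, pr₀ A B ≫ in₀ A B + pr₁ A B ≫ in₁ A B = 𝟙 (bp A B))
    -- a zero object
    (Z : C) (hZ : Limits.IsZero Z)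
    -- biproducts indexed by the antidiagonal of r
    (bb : R → C → C → C)
    (P : ∀ (r : R) (A B : C) (x : {q : R × R // q.1 + q.2 = r}),
      bb r A B ⟶ (bang x.1.1).obj A ⊗ (bang x.1.2).obj B)
    (J : ∀ (r : R) (A B : C) (x : {q : R × R // q.1 + q.2 = r}),
      (bang x.1.1).obj A ⊗ (bang x.1.2).obj B ⟶ bb r A B)
    (hJP : ∀ (r : R) (A B : C) (x y : {q : R × R // q.1 + q.2 = r}),
      J r A B x ≫ P r A B y = if hxy : x = y then eqToHom (by rw [hxy]) else 0)
    (hPJ : ∀ (r : R) (A B : C),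
      ∑ᶠ (x : {q : R × R // q.1 + q.2 = r}), P r A B x ≫ J r A B x = 𝟙 (bb r A B)) :
    -- `χ⊗_r` is an isomorphism with the indicated inverse
    (∀ (r : R) (A B : C),
      seelyMap bang c bp pr₀ pr₁ bb J r A B ≫ seelyInv bang cb bp in₀ in₁ bb P r A B
          = 𝟙 ((bang r).obj (bp A B))
        ∧ seelyInv bang cb bp in₀ in₁ bb P r A B ≫ seelyMap bang c bp pr₀ pr₁ bb J r A B
          = 𝟙 (bb r A B))
    ∧
    -- `χ⊗_r` is natural
    (∀ (r : R) {A A' B B' : C} (f : A ⟶ A') (g : B ⟶ B'),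
      (bang r).map (pr₀ A B ≫ f ≫ in₀ A' B' + pr₁ A B ≫ g ≫ in₁ A' B')
          ≫ seelyMap bang c bp pr₀ pr₁ bb J r A' B'
        = seelyMap bang c bp pr₀ pr₁ bb J r A B
            ≫ ∑ᶠ (x : {q : R × R // q.1 + q.2 = r}),
                P r A B x ≫ ((bang x.1.1).map f ⊗ₘ (bang x.1.2).map g) ≫ J r A' B' x)
    ∧
    -- `χI := w` is an isomorphism with inverse `w̄`
    (w Z ≫ wb Z = 𝟙 ((bang 0).obj Z) ∧ wb Z ≫ w Z = 𝟙 (𝟙_ C)) := by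
  exact ⟨fun r A B => ⟨seelyMap_comp_seelyInv hmod hbp hJP r A B,
      seelyInv_comp_seelyMap hmod h00 h01 h10 h11 hPJ r A B⟩,
    seelyMap_naturality hmod h00 h01 h10 h11 hJP,
    hmod.w_comp_wb_of_isZero hZ, hmod.wb_w Z⟩
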